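/- Let (λ, u, v) be an exact eigen-triplet of H (u*H = λu*, Hv = λv) and (λ̃, ũ, ṽ) approximations with ‖u‖=‖v‖=‖ũ‖=‖ṽ‖=1, δ̃ := ũ*ṽ ≠ 0, and decompositions ũ = γ_u u + σ_u e_u, ṽ = γ_v v + σ_v e_v with e_u ⊥ u, e_v ⊥ v, ‖e_u‖ = ‖e_v‖ = 1. If λ̃ = δ̃⁻¹ ũ*Hṽ, then |λ − λ̃| ≤ |δ̃|⁻¹ · |conj(σ_u)·σ_v| · ‖H − λI‖₂. -/

import Mathlib

open Matrix

noncomputable section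

/-- Euclidean norm of a complex vector. -/
def enorm' {a : Type*} [Fintype a] (v : a → ℂ) : ℝ :=
  Real.sqrt (∑ i, ‖v i‖ ^ 2)

/-- Spectral (operator 2-) norm of a square complex matrix. -/
def opNorm {a b : Type*} [Fintype a] [Fintype b] [DecidableEq b]
    (M : Matrix a b ℂ) : ℝ :=
  ‖LinearMap.toContinuousLinearMap (Matrix.toEuclideanLin M)‖

/-! Since `H - λ I` kills `v` on the right and `u*` on the left, every term of `ũ*(H - λ I)ṽ`
involving `u` or `v` vanishes, so `ũ*(H - λ I)ṽ = conj(σᵤ) σᵥ eᵤ*(H - λ I)eᵥ`. Shifting the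
oblique Rayleigh quotient by `λ` gives `λ̃ - λ = δ̃⁻¹ ũ*(H - λ I)ṽ`, and
`|eᵤ*(H - λ I)eᵥ| ≤ ‖H - λ I‖₂` by Cauchy–Schwarz. -/

namespace Matrix

variable {m : Type*} [Fintype m]

section CommRing

variable {R : Type*} [CommRing R]

theorem sub_smul_one_mulVec_eq_zero [DecidableEq m] {H : Matrix m m R} {c : R} {v : m → R}
    (h : H *ᵥ v = c • v) : (H - c • 1) *ᵥ v = 0 := by
  rw [sub_mulVec, smul_mulVec, one_mulVec, h, sub_self]

theorem vecMul_sub_smul_one_eq_zero [DecidableEq m] {H : Matrix m m R} {c : R} {x : m → R}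
    (h : x ᵥ* H = c • x) : x ᵥ* (H - c • 1) = 0 := by
  rw [vecMul_sub, vecMul_smul, vecMul_one, h, sub_self]

theorem smul_add_smul_dotProduct_mulVec_smul_add_smul {M : Matrix m m R} {x y : m → R}
    (hx : x ᵥ* M = 0) (hy : M *ᵥ y = 0) (a b c d : R) (x' y' : m → R) :
    (a • x + b • x') ⬝ᵥ (M *ᵥ (c • y + d • y')) = b * d * (x' ⬝ᵥ (M *ᵥ y')) := by
  have hx' : x ⬝ᵥ (M *ᵥ y') = 0 := by rw [dotProduct_mulVec, hx, zero_dotProduct]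
  simp only [mulVec_add, mulVec_smul, hy, smul_zero, zero_add, add_dotProduct, smul_dotProduct,
    dotProduct_smul, hx', smul_eq_mul, mul_zero]
  ring

end CommRing

section Field

variable {K : Type*} [Field K]

/-- With `x = star ũ` and `y = ṽ` this is the paper's `λ̃ = δ̃⁻¹ ũ*Hṽ`. -/
def obliqueRayleighQuotient (H : Matrix m m K) (x y : m → K) : K :=
  (x ⬝ᵥ y)⁻¹ * (x ⬝ᵥ (H *ᵥ y))

theorem obliqueRayleighQuotient_sub_smul_one [DecidableEq m] (H : Matrix m m K) (c : K)
    {x y : m → K} (hxy : x ⬝ᵥ y ≠ 0) :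
    obliqueRayleighQuotient (H - c • 1) x y = obliqueRayleighQuotient H x y - c := by
  simp only [obliqueRayleighQuotient, sub_mulVec, smul_mulVec, one_mulVec, dotProduct_sub,
    dotProduct_smul, smul_eq_mul]
  field_simp

end Field

end Matrix

theorem enorm'_eq_norm_toLp {m : Type*} [Fintype m] (x : m → ℂ) :
    enorm' x = ‖WithLp.toLp 2 x‖ := by
  rw [EuclideanSpace.norm_eq, enorm']

theorem norm_star_dotProduct_mulVec_le {m k : Type*} [Fintype m] [Fintype k] [DecidableEq k]
    (M : Matrix m k ℂ) (x : m → ℂ) (y : k → ℂ) :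
    ‖star x ⬝ᵥ (M *ᵥ y)‖ ≤ enorm' x * opNorm M * enorm' y := by
  have hinner : star x ⬝ᵥ (M *ᵥ y)
      = inner ℂ (WithLp.toLp 2 x) (Matrix.toEuclideanLin M (WithLp.toLp 2 y)) := by
    rw [dotProduct_comm]; rfl
  rw [hinner, enorm'_eq_norm_toLp, enorm'_eq_norm_toLp, mul_assoc]
  refine (norm_inner_le_norm _ _).trans (mul_le_mul_of_nonneg_left ?_ (norm_nonneg _))
  exact (LinearMap.toContinuousLinearMap (Matrix.toEuclideanLin M)).le_opNorm _

theorem stmt17_general (n : ℕ)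
    (H : Matrix (Fin n) (Fin n) ℂ)
    (lam : ℂ) (u v eu ev ut vt : Fin n → ℂ)
    (gu su gv sv : ℂ)
    (hleft : star u ᵥ* H = lam • star u)
    (hright : H *ᵥ v = lam • v)
    (hneu : enorm' eu = 1) (hnev : enorm' ev = 1)
    (hdecu : ut = gu • u + su • eu)
    (hdecv : vt = gv • v + sv • ev)
    (hdelta : star ut ⬝ᵥ vt ≠ 0)
    (lamt : ℂ)
    (hlamt : lamt = (star ut ⬝ᵥ vt)⁻¹ * (star ut ⬝ᵥ (H *ᵥ vt))) :
    ‖lam - lamt‖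
      ≤ ‖star ut ⬝ᵥ vt‖⁻¹ * ‖(starRingEnd ℂ) su * sv‖
          * opNorm (H - lam • 1) := by
  set M := H - lam • 1
  have hstar : star ut = star gu • star u + star su • star eu := by
    rw [hdecu, star_add, star_smul, star_smul]
  have hnum : star ut ⬝ᵥ (M *ᵥ vt) = star su * sv * (star eu ⬝ᵥ (M *ᵥ ev)) := by
    rw [hstar, hdecv]
    exact smul_add_smul_dotProduct_mulVec_smul_add_smul (vecMul_sub_smul_one_eq_zero hleft)
      (sub_smul_one_mulVec_eq_zero hright) _ _ _ _ _ _
  have hdiff : lam - lamt = -obliqueRayleighQuotient M (star ut) vt := by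
    rw [obliqueRayleighQuotient_sub_smul_one H lam hdelta, hlamt, obliqueRayleighQuotient]
    ring
  calc ‖lam - lamt‖
      = ‖star ut ⬝ᵥ vt‖⁻¹ * ‖star su * sv‖ * ‖star eu ⬝ᵥ (M *ᵥ ev)‖ := by
        rw [hdiff, norm_neg, obliqueRayleighQuotient, hnum, norm_mul, norm_mul, norm_inv, mul_assoc]
    _ ≤ ‖star ut ⬝ᵥ vt‖⁻¹ * ‖star su * sv‖ * opNorm M := by
        gcongr
        simpa [hneu, hnev] using norm_star_dotProduct_mulVec_le M eu ev

/-- Error bound for the oblique Rayleigh quotient: if `(λ, u, v)` is an exact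
eigen-triplet, `ũ = γᵤu + σᵤeᵤ`, `ṽ = γᵥv + σᵥeᵥ` are unit approximations with
`eᵤ ⊥ u`, `eᵥ ⊥ v`, `δ̃ := ũᴴṽ ≠ 0`, and `λ̃ = δ̃⁻¹ ũᴴHṽ`, then
`|λ − λ̃| ≤ |δ̃|⁻¹ |conj(σᵤ)σᵥ| ‖H − λI‖₂`. -/
theorem stmt17 (n : ℕ)
    (H : Matrix (Fin n) (Fin n) ℂ)
    (lam : ℂ) (u v eu ev ut vt : Fin n → ℂ)
    (gu su gv sv : ℂ)
    (hleft : star u ᵥ* H = lam • star u)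
    (hright : H *ᵥ v = lam • v)
    (hnu : enorm' u = 1) (hnv : enorm' v = 1)
    (hnut : enorm' ut = 1) (hnvt : enorm' vt = 1)
    (hneu : enorm' eu = 1) (hnev : enorm' ev = 1)
    (hdecu : ut = gu • u + su • eu)
    (hdecv : vt = gv • v + sv • ev)
    (hperpu : star u ⬝ᵥ eu = 0)
    (hperpv : star v ⬝ᵥ ev = 0)
    (hdelta : star ut ⬝ᵥ vt ≠ 0)
    (lamt : ℂ)
    (hlamt : lamt = (star ut ⬝ᵥ vt)⁻¹ * (star ut ⬝ᵥ (H *ᵥ vt))) :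
    ‖lam - lamt‖
      ≤ ‖star ut ⬝ᵥ vt‖⁻¹ * ‖(starRingEnd ℂ) su * sv‖
          * opNorm (H - lam • 1) :=
  stmt17_general n H lam u v eu ev ut vt gu su gv sv hleft hright hneu hnev hdecu hdecv hdelta lamt
    hlamt
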